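/- Let s > 0, t > 0 and 0 ≤ r < s. For a finite positive Borel measure μ on [0,1), the following are equivalent: (i) μ is an s-Carleson measure; (ii) sup_{a∈𝔻} ∫_{[0,1)} (1-|a|)^t / ((1-x)^r (1-|a|x)^{s+t-r}) dμ(x) < ∞; (iii) sup_{a∈𝔻} ∫_{[0,1)} (1-|a|)^t / ((1-x)^r |1-ax|^{s+t-r}) dμ(x) < ∞. -/

import Mathlib

/-!
(i) ⇒ (ii): put b = |a|. On [0, b) the integrand is at most (1-b)^t (1-x)^(-(s+t)), on [b, 1) at
most (1-b)^(r-s) (1-x)^(-r). The Carleson bound controls the superlevel sets of (1-x)^(-p), and the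
layer-cake formula turns this into ∫_[0,b) (1-x)^(-(s+t)) dμ ≲ 1 + (1-b)^(-t) and
∫_[b,1) (1-x)^(-r) dμ ≲ (1-b)^(s-r), so the integral is bounded uniformly in a.

(ii) ⇒ (iii) because 1 - |a| x ≤ |1 - a x|.

(iii) ⇒ (i): for a = b ∈ [0, 1) the integrand is at least 2^(r-s-t) (1-b)^(-s) on [b, 1),
so μ [b, 1) ≲ (1-b)^s.
-/

open MeasureTheory Set Real

def HasCarlesonBound (μ : Measure ℝ) (s C : ℝ) : Prop :=
  ∀ x ∈ Ico (0:ℝ) 1, μ (Ico x 1) ≤ ENNReal.ofReal (C * (1 - x) ^ s)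

/-- The integrand of (ii), with `b = ‖a‖`. -/
noncomputable def carlesonKernel (s t r b x : ℝ) : ℝ :=
  (1 - b) ^ t / ((1 - x) ^ r * (1 - b * x) ^ (s + t - r))

section carlesonKernel

variable {s t r b x : ℝ}

lemma carlesonKernel_le_of_le (hstr : 0 ≤ s + t - r) (hx0 : 0 ≤ x) (hxb : x ≤ b) (hb1 : b < 1) :
    carlesonKernel s t r b x ≤ (1 - b) ^ t * (1 - x) ^ (-(s + t)) := by
  have h1x : 0 < 1 - x := by linarith
  have hbx : 1 - x ≤ 1 - b * x := by nlinarith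
  calc carlesonKernel s t r b x ≤ (1 - b) ^ t / ((1 - x) ^ r * (1 - x) ^ (s + t - r)) := by
        unfold carlesonKernel
        gcongr
    _ = (1 - b) ^ t * (1 - x) ^ (-(s + t)) := by
        rw [← rpow_add h1x, add_sub_cancel, rpow_neg h1x.le, div_eq_mul_inv]

lemma carlesonKernel_le_of_ge (hstr : 0 ≤ s + t - r) (hb0 : 0 ≤ b) (hbx : b ≤ x) (hx1 : x < 1) :
    carlesonKernel s t r b x ≤ (1 - b) ^ (r - s) * (1 - x) ^ (-r) := by
  have h1b : 0 < 1 - b := by linarith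
  have h1x : 0 < 1 - x := by linarith
  calc carlesonKernel s t r b x ≤ (1 - b) ^ t / ((1 - x) ^ r * (1 - b) ^ (s + t - r)) := by
        unfold carlesonKernel
        gcongr
        nlinarith
    _ = (1 - b) ^ (r - s) * (1 - x) ^ (-r) := by
        have hexp : (1 - b) ^ (r - s) = (1 - b) ^ t / (1 - b) ^ (s + t - r) := by
          rw [← rpow_sub h1b]
          ring_nf
        rw [hexp, rpow_neg h1x.le]
        ring

lemma inv_two_rpow_mul_le_carlesonKernel (hr : 0 ≤ r) (hstr : 0 ≤ s + t - r) (hb0 : 0 ≤ b)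
    (hbx : b ≤ x) (hx1 : x < 1) :
    (2 ^ (s + t - r) * (1 - b) ^ s)⁻¹ ≤ carlesonKernel s t r b x := by
  have h1b : 0 < 1 - b := by linarith
  calc (2 ^ (s + t - r) * (1 - b) ^ s)⁻¹
      = (1 - b) ^ t / ((1 - b) ^ r * (2 * (1 - b)) ^ (s + t - r)) := by
        have hsplit : (1 - b) ^ r * (1 - b) ^ (s + t - r) = (1 - b) ^ s * (1 - b) ^ t := by
          rw [← rpow_add h1b, ← rpow_add h1b]
          ring_nf
        rw [mul_rpow zero_le_two h1b.le, mul_left_comm, hsplit]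
        field_simp
    _ ≤ carlesonKernel s t r b x := by
        unfold carlesonKernel
        have : 0 < 1 - b * x := by nlinarith
        gcongr
        nlinarith [mul_nonneg (sub_nonneg.2 hbx) (by linarith : 0 ≤ 2 - x)]

lemma norm_one_sub_ofReal_mul_ofReal {b x : ℝ} (h : b * x ≤ 1) : ‖1 - (b : ℂ) * x‖ = 1 - b * x := by
  rw [← Complex.ofReal_mul, ← Complex.ofReal_one, ← Complex.ofReal_sub, Complex.norm_real,
    Real.norm_of_nonneg (by linarith)]

lemma rpow_div_norm_le_carlesonKernel {s t r x : ℝ} {a : ℂ} (hstr : 0 ≤ s + t - r) (ha : ‖a‖ ≤ 1)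
    (hx : x ∈ Ico (0:ℝ) 1) :
    (1 - ‖a‖) ^ t / ((1 - x) ^ r * ‖1 - a * x‖ ^ (s + t - r)) ≤ carlesonKernel s t r ‖a‖ x := by
  obtain ⟨hx0, hx1⟩ := hx
  have hax : 0 < 1 - ‖a‖ * x := by nlinarith [norm_nonneg a]
  have htri : 1 - ‖a‖ * x ≤ ‖1 - a * x‖ := by
    simpa [Complex.norm_real, abs_of_nonneg hx0] using norm_sub_norm_le (1 : ℂ) (a * x)
  unfold carlesonKernel
  have : 0 ≤ 1 - ‖a‖ := by linarith
  gcongr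

end carlesonKernel

lemma lintegral_Ioi_rpow {e T : ℝ} (he : e < -1) (hT : 0 < T) :
    ∫⁻ l in Ioi T, ENNReal.ofReal (l ^ e) = ENNReal.ofReal (-T ^ (e + 1) / (e + 1)) := by
  rw [← ofReal_integral_eq_lintegral_ofReal (integrableOn_Ioi_rpow_of_lt he hT)
    (ae_restrict_of_forall_mem measurableSet_Ioi fun l hl => rpow_nonneg (hT.trans hl).le _),
    integral_Ioi_rpow_of_lt he hT]

lemma lintegral_Ioc_one_rpow {e T : ℝ} (he : -1 < e) (hT : 1 ≤ T) :
    ∫⁻ l in Ioc 1 T, ENNReal.ofReal (l ^ e) = ENNReal.ofReal ((T ^ (e + 1) - 1) / (e + 1)) := by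
  have hint : IntegrableOn (fun l : ℝ => l ^ e) (Ioc 1 T) :=
    (intervalIntegrable_iff_integrableOn_Ioc_of_le hT).1
      (intervalIntegral.intervalIntegrable_rpow' he)
  rw [← ofReal_integral_eq_lintegral_ofReal hint (ae_restrict_of_forall_mem measurableSet_Ioc
      fun l hl => rpow_nonneg (zero_le_one.trans hl.1.le) _),
    ← intervalIntegral.integral_of_le hT, integral_rpow (Or.inl he), one_rpow]

lemma rpow_neg_rpow_neg_div_add_one {x p s : ℝ} (hx : 0 ≤ x) (hp : p ≠ 0) :
    (x ^ (-p)) ^ (-(s / p) + 1) = x ^ (s - p) := by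
  rw [← rpow_mul hx]
  congr 1
  field_simp
  ring

namespace HasCarlesonBound

variable {μ : Measure ℝ} {s C : ℝ}

lemma measure_setOf_lt_rpow_neg_inter_le (hμ : HasCarlesonBound μ s C) {p l : ℝ} (hp : 0 < p)
    (hl : 1 ≤ l) {A : Set ℝ} (hA : A ⊆ Ico 0 1) :
    μ ({x | l < (1 - x) ^ (-p)} ∩ A) ≤ ENNReal.ofReal (C * l ^ (-(s / p))) := by
  have hl0 : 0 < l := by linarith
  have hlp : 0 < l ^ (-p)⁻¹ := rpow_pos_of_pos hl0 _
  have hlp1 : l ^ (-p)⁻¹ ≤ 1 := rpow_le_one_of_one_le_of_nonpos hl (by simp [hp.le])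
  have hsub : {x | l < (1 - x) ^ (-p)} ∩ A ⊆ Ico (1 - l ^ (-p)⁻¹) 1 := by
    rintro x ⟨hx, hxA⟩
    have h1x : 0 < 1 - x := by linarith [(hA hxA).2]
    have := (lt_rpow_inv_iff_of_neg h1x hl0 (neg_neg_of_pos hp)).2 hx
    exact ⟨by linarith, (hA hxA).2⟩
  calc μ ({x | l < (1 - x) ^ (-p)} ∩ A) ≤ μ (Ico (1 - l ^ (-p)⁻¹) 1) := measure_mono hsub
    _ ≤ ENNReal.ofReal (C * (1 - (1 - l ^ (-p)⁻¹)) ^ s) := hμ _ ⟨by linarith, by linarith⟩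
    _ = ENNReal.ofReal (C * l ^ (-(s / p))) := by
      rw [sub_sub_cancel, ← rpow_mul hl0.le, inv_neg, neg_mul, ← div_eq_inv_mul]

lemma setLIntegral_measure_superlevel_le (hμ : HasCarlesonBound μ s C) (hC : 0 ≤ C) {p : ℝ}
    (hp : 0 < p) {A S : Set ℝ} (hA : A ⊆ Ico 0 1) (hAm : MeasurableSet A) (hS : MeasurableSet S)
    (hS1 : S ⊆ Ici 1) :
    ∫⁻ l in S, μ.restrict A {x | l < (1 - x) ^ (-p)}
      ≤ ENNReal.ofReal C * ∫⁻ l in S, ENNReal.ofReal (l ^ (-(s / p))) := by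
  rw [← lintegral_const_mul' _ _ ENNReal.ofReal_ne_top]
  refine setLIntegral_mono' hS fun l hl => ?_
  rw [← ENNReal.ofReal_mul hC, Measure.restrict_apply' hAm]
  exact hμ.measure_setOf_lt_rpow_neg_inter_le hp (hS1 hl) hA

lemma lintegral_Ico_rpow_neg_le (hμ : HasCarlesonBound μ s C) (hC : 0 ≤ C) {p b : ℝ}
    (hp : 0 ≤ p) (hps : p < s) (hb : b ∈ Ico (0:ℝ) 1) :
    ∫⁻ x in Ico b 1, ENNReal.ofReal ((1 - x) ^ (-p)) ∂μ
      ≤ ENNReal.ofReal (C * (s / (s - p)) * (1 - b) ^ (s - p)) := by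
  obtain ⟨hb0, hb1⟩ := hb
  have h1b : 0 < 1 - b := by linarith
  rcases hp.eq_or_lt with rfl | hp
  · simpa [(by linarith : s ≠ 0)] using hμ b ⟨hb0, hb1⟩
  set T := (1 - b) ^ (-p)
  have hT : 1 ≤ T := one_le_rpow_of_pos_of_le_one_of_nonpos h1b (by linarith) (by linarith)
  have hsp : 1 < s / p := (one_lt_div hp).2 hps
  have hsp0 : s - p ≠ 0 := (sub_pos.2 hps).ne'
  -- Layer cake: up to height `T` the superlevel sets lie in `[b, 1)`; above `T` the Carleson
  -- bound gives `C * l ^ (-(s / p))`, which is integrable at infinity because `s / p > 1`.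
  rw [lintegral_eq_lintegral_meas_lt _ (ae_restrict_of_forall_mem measurableSet_Ico
      fun x hx => rpow_nonneg (by linarith [hx.2]) _) (by fun_prop),
    ← Ioc_union_Ioi_eq_Ioi (zero_le_one.trans hT),
    lintegral_union measurableSet_Ioi (Ioc_disjoint_Ioi le_rfl)]
  have hlow : ∫⁻ l in Ioc 0 T, μ.restrict (Ico b 1) {x | l < (1 - x) ^ (-p)}
      ≤ ENNReal.ofReal (C * (1 - b) ^ (s - p)) := calc
    _ ≤ ∫⁻ _ in Ioc 0 T, ENNReal.ofReal (C * (1 - b) ^ s) :=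
        setLIntegral_mono' measurableSet_Ioc fun l _ => (measure_mono (subset_univ _)).trans
          (by rw [Measure.restrict_apply_univ]; exact hμ b ⟨hb0, hb1⟩)
    _ = ENNReal.ofReal (C * (1 - b) ^ s * T) := by
        rw [setLIntegral_const, Real.volume_Ioc, sub_zero, ← ENNReal.ofReal_mul (by positivity)]
    _ = ENNReal.ofReal (C * (1 - b) ^ (s - p)) := by
        rw [mul_assoc, ← rpow_add h1b, ← sub_eq_add_neg]
  have hhigh : ∫⁻ l in Ioi T, μ.restrict (Ico b 1) {x | l < (1 - x) ^ (-p)}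
      ≤ ENNReal.ofReal (C * (p / (s - p)) * (1 - b) ^ (s - p)) := calc
    _ ≤ ENNReal.ofReal C * ∫⁻ l in Ioi T, ENNReal.ofReal (l ^ (-(s / p))) :=
        hμ.setLIntegral_measure_superlevel_le hC hp (Ico_subset_Ico_left hb0) measurableSet_Ico
          measurableSet_Ioi fun l hl => hT.trans (le_of_lt hl)
    _ = ENNReal.ofReal (C * (p / (s - p)) * (1 - b) ^ (s - p)) := by
        rw [lintegral_Ioi_rpow (by linarith) (by positivity), ← ENNReal.ofReal_mul hC,
          rpow_neg_rpow_neg_div_add_one h1b.le hp.ne',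
          show -(s / p) + 1 = -((s - p) / p) by field_simp; ring, neg_div_neg_eq]
        field_simp
  calc _ ≤ _ := add_le_add hlow hhigh
    _ = _ := by
      rw [← ENNReal.ofReal_add (by positivity) (by positivity)]
      congr 1
      field_simp
      ring

lemma lintegral_Ico_zero_rpow_neg_le (hμ : HasCarlesonBound μ s C) (hC : 0 ≤ C) {q b : ℝ}
    (hq : 0 < q) (hsq : s < q) (hb : b ∈ Ico (0:ℝ) 1) :
    ∫⁻ x in Ico 0 b, ENNReal.ofReal ((1 - x) ^ (-q)) ∂μ
      ≤ μ univ + ENNReal.ofReal (C * (q / (q - s)) * (1 - b) ^ (s - q)) := by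
  obtain ⟨hb0, hb1⟩ := hb
  have h1b : 0 < 1 - b := by linarith
  have hqs : q - s ≠ 0 := (sub_pos.2 hsq).ne'
  set T := (1 - b) ^ (-q)
  have hT : 1 ≤ T := one_le_rpow_of_pos_of_le_one_of_nonpos h1b (by linarith) (by linarith)
  -- Layer cake: heights in `(0, 1]` cost at most `μ univ`, heights in `(1, T]` at most
  -- `C * l ^ (-(s / q))`, and above `T` the superlevel sets miss `[0, b)`.
  rw [lintegral_eq_lintegral_meas_lt _ (ae_restrict_of_forall_mem measurableSet_Ico
      fun x hx => rpow_nonneg (by linarith [hx.2]) _) (by fun_prop),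
    ← Ioc_union_Ioi_eq_Ioi zero_le_one, lintegral_union measurableSet_Ioi (Ioc_disjoint_Ioi le_rfl),
    ← Ioc_union_Ioi_eq_Ioi hT, lintegral_union measurableSet_Ioi (Ioc_disjoint_Ioi le_rfl)]
  have hlow : ∫⁻ l in Ioc (0:ℝ) 1, μ.restrict (Ico 0 b) {x | l < (1 - x) ^ (-q)} ≤ μ univ := calc
    _ ≤ ∫⁻ _ in Ioc (0:ℝ) 1, μ univ :=
        setLIntegral_mono' measurableSet_Ioc fun l _ =>
          (Measure.restrict_le_self _).trans (measure_mono (subset_univ _))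
    _ = μ univ := by simp
  have hmid : ∫⁻ l in Ioc 1 T, μ.restrict (Ico 0 b) {x | l < (1 - x) ^ (-q)}
      ≤ ENNReal.ofReal (C * (q / (q - s)) * (1 - b) ^ (s - q)) := calc
    _ ≤ ENNReal.ofReal C * ∫⁻ l in Ioc 1 T, ENNReal.ofReal (l ^ (-(s / q))) :=
        hμ.setLIntegral_measure_superlevel_le hC hq (Ico_subset_Ico_right hb1.le)
          measurableSet_Ico measurableSet_Ioc fun l hl => hl.1.le
    _ ≤ ENNReal.ofReal (C * (q / (q - s)) * (1 - b) ^ (s - q)) := by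
        rw [lintegral_Ioc_one_rpow (by rw [neg_lt_neg_iff, div_lt_one hq]; exact hsq) hT,
          ← ENNReal.ofReal_mul hC, rpow_neg_rpow_neg_div_add_one h1b.le hq.ne',
          show -(s / q) + 1 = (q - s) / q by field_simp; ring,
          show ((1 - b) ^ (s - q) - 1) / ((q - s) / q) = q / (q - s) * ((1 - b) ^ (s - q) - 1)
          by field_simp, ← mul_assoc]
        have : 0 ≤ C * (q / (q - s)) := mul_nonneg hC (div_nonneg hq.le (sub_pos.2 hsq).le)
        gcongr
        linarith
  have hhigh : ∀ l ∈ Ioi T, μ.restrict (Ico 0 b) {x | l < (1 - x) ^ (-q)} = 0 := fun l hl => by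
    rw [Measure.restrict_apply' measurableSet_Ico]
    refine measure_mono_null (fun x ⟨hx, hxb⟩ => ?_) measure_empty
    exact (not_lt.2 ((rpow_le_rpow_of_nonpos h1b (by linarith [hxb.2]) (by linarith)).trans
      (le_of_lt hl))) hx
  rw [setLIntegral_congr_fun measurableSet_Ioi hhigh, lintegral_zero, add_zero]
  exact add_le_add hlow hmid

lemma lintegral_carlesonKernel_le (hμ : HasCarlesonBound μ s C) (hC : 0 ≤ C) {t r b : ℝ}
    (ht : 0 < t) (hr : 0 ≤ r) (hrs : r < s) (hb : b ∈ Ico (0:ℝ) 1) :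
    ∫⁻ x in Ico 0 1, ENNReal.ofReal (carlesonKernel s t r b x) ∂μ
      ≤ μ univ + ENNReal.ofReal (C * ((s + t) / t)) + ENNReal.ofReal (C * (s / (s - r))) := by
  obtain ⟨hb0, hb1⟩ := hb
  have h1b : 0 < 1 - b := by linarith
  have hstr : 0 ≤ s + t - r := by linarith
  rw [← Ico_union_Ico_eq_Ico hb0 hb1.le, lintegral_union measurableSet_Ico Ico_disjoint_Ico_same]
  have hnear : ∫⁻ x in Ico 0 b, ENNReal.ofReal (carlesonKernel s t r b x) ∂μ
      ≤ μ univ + ENNReal.ofReal (C * ((s + t) / t)) := calc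
    _ ≤ ∫⁻ x in Ico 0 b, ENNReal.ofReal ((1 - b) ^ t) * ENNReal.ofReal ((1 - x) ^ (-(s + t))) ∂μ :=
        setLIntegral_mono' measurableSet_Ico fun x hx => by
          rw [← ENNReal.ofReal_mul (by positivity)]
          exact ENNReal.ofReal_le_ofReal (carlesonKernel_le_of_le hstr hx.1 hx.2.le hb1)
    _ ≤ ENNReal.ofReal ((1 - b) ^ t) *
          (μ univ + ENNReal.ofReal (C * ((s + t) / (s + t - s)) * (1 - b) ^ (s - (s + t)))) := by
        rw [lintegral_const_mul' _ _ ENNReal.ofReal_ne_top]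
        gcongr
        exact hμ.lintegral_Ico_zero_rpow_neg_le hC (by linarith) (by linarith) ⟨hb0, hb1⟩
    _ ≤ μ univ + ENNReal.ofReal (C * ((s + t) / t)) := by
        have hpow : (1 - b) ^ t ≤ 1 := rpow_le_one h1b.le (by linarith) ht.le
        rw [mul_add, ← ENNReal.ofReal_mul (by positivity), add_sub_cancel_left, sub_add_cancel_left,
          mul_left_comm, ← rpow_add h1b, add_neg_cancel, rpow_zero, mul_one]
        gcongr
        calc ENNReal.ofReal ((1 - b) ^ t) * μ univ ≤ 1 * μ univ := by
              gcongr
              exact ENNReal.ofReal_le_one.2 hpow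
          _ = μ univ := one_mul _
  have hfar : ∫⁻ x in Ico b 1, ENNReal.ofReal (carlesonKernel s t r b x) ∂μ
      ≤ ENNReal.ofReal (C * (s / (s - r))) := calc
    _ ≤ ∫⁻ x in Ico b 1, ENNReal.ofReal ((1 - b) ^ (r - s)) * ENNReal.ofReal ((1 - x) ^ (-r)) ∂μ :=
        setLIntegral_mono' measurableSet_Ico fun x hx => by
          rw [← ENNReal.ofReal_mul (by positivity)]
          exact ENNReal.ofReal_le_ofReal (carlesonKernel_le_of_ge hstr hb0 hx.1 hx.2)
    _ ≤ ENNReal.ofReal ((1 - b) ^ (r - s)) *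
          ENNReal.ofReal (C * (s / (s - r)) * (1 - b) ^ (s - r)) := by
        rw [lintegral_const_mul' _ _ ENNReal.ofReal_ne_top]
        gcongr
        exact hμ.lintegral_Ico_rpow_neg_le hC hr hrs ⟨hb0, hb1⟩
    _ = ENNReal.ofReal (C * (s / (s - r))) := by
        rw [← ENNReal.ofReal_mul (by positivity), mul_left_comm, ← rpow_add h1b,
          sub_add_sub_cancel', sub_self, rpow_zero, mul_one]
  exact add_le_add hnear hfar

end HasCarlesonBound

lemma hasCarlesonBound_of_lintegral_carlesonKernel_le {μ : Measure ℝ} {s t r M : ℝ}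
    (hr : 0 ≤ r) (hstr : 0 ≤ s + t - r)
    (hM : ∀ b ∈ Ico (0:ℝ) 1, ∫⁻ x in Ico 0 1, ENNReal.ofReal (carlesonKernel s t r b x) ∂μ
      ≤ ENNReal.ofReal M) :
    HasCarlesonBound μ s (2 ^ (s + t - r) * M) := by
  intro b hb
  have h1b : 0 < 1 - b := by linarith [hb.2]
  set D := 2 ^ (s + t - r) * (1 - b) ^ s
  have hD : 0 < D := by positivity
  have key : ENNReal.ofReal D⁻¹ * μ (Ico b 1) ≤ ENNReal.ofReal M := calc
    _ = ∫⁻ _ in Ico b 1, ENNReal.ofReal D⁻¹ ∂μ := (setLIntegral_const _ _).symm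
    _ ≤ ∫⁻ x in Ico b 1, ENNReal.ofReal (carlesonKernel s t r b x) ∂μ :=
        setLIntegral_mono' measurableSet_Ico fun x hx => ENNReal.ofReal_le_ofReal
          (inv_two_rpow_mul_le_carlesonKernel hr hstr hb.1 hx.1 hx.2)
    _ ≤ ∫⁻ x in Ico 0 1, ENNReal.ofReal (carlesonKernel s t r b x) ∂μ :=
        lintegral_mono_set (Ico_subset_Ico_left hb.1)
    _ ≤ ENNReal.ofReal M := hM b hb
  rw [mul_comm, ← ENNReal.le_div_iff_mul_le (Or.inl (ENNReal.ofReal_pos.2 (inv_pos.2 hD)).ne')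
    (Or.inl ENNReal.ofReal_ne_top), ← ENNReal.ofReal_div_of_pos (inv_pos.2 hD),
    div_inv_eq_mul] at key
  exact key.trans_eq (congrArg _ (by ring))

theorem stmt_3 (s t r : ℝ) (hs : 0 < s) (ht : 0 < t) (hr0 : 0 ≤ r) (hrs : r < s)
    (μ : Measure ℝ) [IsFiniteMeasure μ] :
    List.TFAE
      [ (∃ C : ℝ, 0 < C ∧ ∀ x ∈ Ico (0:ℝ) 1, μ (Ico x 1) ≤ ENNReal.ofReal (C * (1 - x) ^ s)),
        (∃ M : ℝ, ∀ a ∈ Metric.ball (0:ℂ) 1,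
          (∫⁻ x in Ico (0:ℝ) 1,
            ENNReal.ofReal ((1 - ‖a‖) ^ t / ((1 - x) ^ r * (1 - ‖a‖ * x) ^ (s + t - r))) ∂μ)
            ≤ ENNReal.ofReal M),
        (∃ M : ℝ, ∀ a ∈ Metric.ball (0:ℂ) 1,
          (∫⁻ x in Ico (0:ℝ) 1,
            ENNReal.ofReal ((1 - ‖a‖) ^ t /
              ((1 - x) ^ r * ‖1 - a * (x:ℂ)‖ ^ (s + t - r))) ∂μ)
            ≤ ENNReal.ofReal M) ] := by
  have hstr : 0 ≤ s + t - r := by linarith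
  tfae_have 1 → 2 := by
    rintro ⟨C, hC, hμ : HasCarlesonBound μ s C⟩
    refine ⟨μ.real univ + C * ((s + t) / t) + C * (s / (s - r)), fun a ha => ?_⟩
    have hsr : 0 < s - r := by linarith
    rw [ENNReal.ofReal_add (by positivity) (by positivity),
      ENNReal.ofReal_add (by positivity) (by positivity), ofReal_measureReal]
    exact hμ.lintegral_carlesonKernel_le hC.le ht hr0 hrs ⟨norm_nonneg a, mem_ball_zero_iff.1 ha⟩
  tfae_have 2 → 3 := fun ⟨M, hM⟩ => ⟨M, fun a ha =>
    (setLIntegral_mono' measurableSet_Ico fun x hx => ENNReal.ofReal_le_ofReal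
      (rpow_div_norm_le_carlesonKernel hstr (mem_ball_zero_iff.1 ha).le hx)).trans (hM a ha)⟩
  tfae_have 3 → 1 := by
    rintro ⟨M, hM⟩
    refine ⟨2 ^ (s + t - r) * max M 1, by positivity,
      hasCarlesonBound_of_lintegral_carlesonKernel_le hr0 hstr fun b hb => ?_⟩
    have hb' : (b : ℂ) ∈ Metric.ball 0 1 := by simpa [abs_of_nonneg hb.1] using hb.2
    refine le_trans (le_of_eq (setLIntegral_congr_fun measurableSet_Ico fun x hx => ?_))
      ((hM b hb').trans (ENNReal.ofReal_le_ofReal (le_max_left _ _)))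
    rw [carlesonKernel, Complex.norm_real, norm_of_nonneg hb.1,
      norm_one_sub_ofReal_mul_ofReal (by nlinarith [hb.1, hb.2, hx.1, hx.2])]
  tfae_finish
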